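/- Let δ > 0, M > 0, T ≥ 0, and let f : ℝ → [0, ∞) be Lebesgue measurable and left-constant, i.e. f(v) = f(0) for all v ≤ 0. Then ∫₀^T (e^{M·u}/δ)·(∫_{u−δ}^u f(v) dv) du ≤ ((e^{M·δ} − 1)/(M·δ))·(δ·f(0) + ∫₀^T e^{M·u}·f(u) du). In particular, if δ ≤ 1 the right-hand side is at most ((e^{Mδ} − 1)/(Mδ))·(f(0) + ∫₀^T e^{Mu}·f(u) du). -/

import Mathlib

open MeasureTheory ENNReal Set

/-!
By Tonelli, the point `v` of the window `[u - δ, u]` is weighted by `∫ e^{Mu}/δ` over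
`u ∈ [v, v + δ] ∩ [0, T]`, which is at most `(1/δ) ∫_v^{v+δ} e^{Mu} du = c e^{Mv}` with
`c = (e^{Mδ} - 1)/(Mδ)`, and vanishes unless `v ∈ [-δ, T]`. On `[-δ, 0]` we have `e^{Mv} ≤ 1` and
`f v = f 0`, which produces the term `δ f(0)`.
-/

theorem integral_exp_mul_of_ne_zero {M : ℝ} (hM : M ≠ 0) (a b : ℝ) :
    ∫ x in a..b, Real.exp (M * x) = (Real.exp (M * b) - Real.exp (M * a)) / M := by
  rw [intervalIntegral.integral_comp_mul_left Real.exp hM, integral_exp, smul_eq_mul,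
    inv_mul_eq_div]

theorem lintegral_Icc_ofReal_exp_mul_div {M δ : ℝ} (hM : M ≠ 0) (hδ : 0 < δ) (v : ℝ) :
    ∫⁻ u in Icc v (v + δ), ENNReal.ofReal (Real.exp (M * u) / δ) =
      ENNReal.ofReal ((Real.exp (M * δ) - 1) / (M * δ)) * ENNReal.ofReal (Real.exp (M * v)) := by
  rw [← ofReal_integral_eq_lintegral_ofReal (by fun_prop : Continuous _).integrableOn_Icc
      (.of_forall fun u => by positivity),
    integral_Icc_eq_integral_Ioc, ← intervalIntegral.integral_of_le (by linarith),
    intervalIntegral.integral_div, integral_exp_mul_of_ne_zero hM,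
    ← ENNReal.ofReal_mul' (by positivity)]
  congr 1
  rw [mul_add, Real.exp_add]
  field_simp

theorem indicator_Icc_sub_eq_indicator_Icc_add {β : Type*} [Zero β] (f : ℝ → β) (δ u v : ℝ) :
    (Icc (u - δ) u).indicator f v = (Icc v (v + δ)).indicator (fun _ => f v) u := by
  simp only [indicator_apply, mem_Icc]
  congr 1
  exact propext ⟨fun h => ⟨h.2, by linarith [h.1]⟩, fun h => ⟨by linarith [h.2], h.1⟩⟩

theorem lintegral_mul_lintegral_Icc_sub {w f : ℝ → ℝ≥0∞} (hw : Measurable w) (hf : Measurable f)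
    (s : Set ℝ) (δ : ℝ) :
    ∫⁻ u in s, w u * ∫⁻ v in Icc (u - δ) u, f v =
      ∫⁻ v, (∫⁻ u in Icc v (v + δ) ∩ s, w u) * f v := by
  have hwindow : MeasurableSet {q : ℝ × ℝ | q.2 ∈ Icc (q.1 - δ) q.1} :=
    (measurableSet_le (measurable_fst.sub_const δ) measurable_snd).inter
      (measurableSet_le measurable_snd measurable_fst)
  have hmeas : Measurable fun q : ℝ × ℝ => w q.1 * (Icc (q.1 - δ) q.1).indicator f q.2 :=
    (hw.comp measurable_fst).mul ((hf.comp measurable_snd).indicator hwindow)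
  calc ∫⁻ u in s, w u * ∫⁻ v in Icc (u - δ) u, f v
      = ∫⁻ u in s, ∫⁻ v, w u * (Icc (u - δ) u).indicator f v := by
        refine lintegral_congr fun u => ?_
        rw [lintegral_const_mul _ (hf.indicator measurableSet_Icc),
          lintegral_indicator measurableSet_Icc]
    _ = ∫⁻ v, ∫⁻ u in s, w u * (Icc (u - δ) u).indicator f v :=
        lintegral_lintegral_swap hmeas.aemeasurable
    _ = ∫⁻ v, (∫⁻ u in Icc v (v + δ) ∩ s, w u) * f v := by
        refine lintegral_congr fun v => ?_
        have hflip : ∀ u, w u * (Icc (u - δ) u).indicator f v =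
            (Icc v (v + δ)).indicator (fun u => w u * f v) u := fun u => by
          rw [indicator_Icc_sub_eq_indicator_Icc_add, indicator_mul_right]
        simp_rw [hflip]
        rw [lintegral_indicator measurableSet_Icc, lintegral_mul_const _ hw,
          Measure.restrict_restrict measurableSet_Icc]

theorem lintegral_ofReal_exp_mul_div_window_le {δ M : ℝ} (hδ : 0 < δ) (hM : M ≠ 0) (a b : ℝ)
    {f : ℝ → ℝ≥0∞} (hf : Measurable f) :
    ∫⁻ u in Icc a b, ENNReal.ofReal (Real.exp (M * u) / δ) * ∫⁻ v in Icc (u - δ) u, f v ≤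
      ENNReal.ofReal ((Real.exp (M * δ) - 1) / (M * δ)) *
        ∫⁻ v in Icc (a - δ) b, ENNReal.ofReal (Real.exp (M * v)) * f v := by
  rw [lintegral_mul_lintegral_Icc_sub (by fun_prop) hf, ← lintegral_const_mul _ (by fun_prop),
    ← lintegral_indicator measurableSet_Icc]
  refine lintegral_mono fun v => ?_
  by_cases hv : v ∈ Icc (a - δ) b
  · rw [indicator_of_mem hv, ← mul_assoc, ← lintegral_Icc_ofReal_exp_mul_div hM hδ v]
    gcongr
    exact inter_subset_left
  · have hdisj : Icc v (v + δ) ∩ Icc a b = ∅ := by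
      rw [mem_Icc, not_and_or, not_le, not_le] at hv
      ext u
      simp only [mem_inter_iff, mem_Icc, mem_empty_iff_false, iff_false]
      rintro ⟨⟨hvu, huv⟩, hau, hub⟩
      rcases hv with hv | hv <;> linarith
    simp [indicator_of_notMem hv, hdisj]

theorem setLIntegral_Icc_neg_ofReal_exp_mul_le {δ M : ℝ} (hM : 0 ≤ M) {f : ℝ → ℝ≥0∞}
    (hconst : ∀ v : ℝ, v ≤ 0 → f v = f 0) :
    ∫⁻ v in Icc (-δ) 0, ENNReal.ofReal (Real.exp (M * v)) * f v ≤ ENNReal.ofReal δ * f 0 :=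
  calc ∫⁻ v in Icc (-δ) 0, ENNReal.ofReal (Real.exp (M * v)) * f v
      ≤ ∫⁻ _ in Icc (-δ) 0, f 0 := setLIntegral_mono measurable_const fun v hv => by
        rw [hconst v hv.2]
        exact mul_le_of_le_one_left zero_le
          (ENNReal.ofReal_le_one.2 (Real.exp_le_one_iff.2 (mul_nonpos_of_nonneg_of_nonpos hM hv.2)))
    _ = ENNReal.ofReal δ * f 0 := by
      rw [setLIntegral_const, Real.volume_Icc, zero_sub, neg_neg, mul_comm]

theorem window_average_exp_weight_bound_general (δ M T : ℝ) (hδ : 0 < δ) (hM : 0 < M)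
    (f : ℝ → ℝ≥0∞) (hf : Measurable f) (hconst : ∀ v : ℝ, v ≤ 0 → f v = f 0) :
    ((∫⁻ u in Set.Icc (0 : ℝ) T,
        ENNReal.ofReal (Real.exp (M * u) / δ) * ∫⁻ v in Set.Icc (u - δ) u, f v) ≤
      ENNReal.ofReal ((Real.exp (M * δ) - 1) / (M * δ)) *
        (ENNReal.ofReal δ * f 0 +
          ∫⁻ u in Set.Icc (0 : ℝ) T, ENNReal.ofReal (Real.exp (M * u)) * f u)) ∧
    (δ ≤ 1 →
      (∫⁻ u in Set.Icc (0 : ℝ) T,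
          ENNReal.ofReal (Real.exp (M * u) / δ) * ∫⁻ v in Set.Icc (u - δ) u, f v) ≤
        ENNReal.ofReal ((Real.exp (M * δ) - 1) / (M * δ)) *
          (f 0 + ∫⁻ u in Set.Icc (0 : ℝ) T, ENNReal.ofReal (Real.exp (M * u)) * f u)) := by
  have hsplit : ∫⁻ v in Icc (0 - δ) T, ENNReal.ofReal (Real.exp (M * v)) * f v ≤
      ENNReal.ofReal δ * f 0 + ∫⁻ u in Icc 0 T, ENNReal.ofReal (Real.exp (M * u)) * f u :=
    calc ∫⁻ v in Icc (0 - δ) T, ENNReal.ofReal (Real.exp (M * v)) * f v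
        ≤ ∫⁻ v in Icc (-δ) 0 ∪ Icc 0 T, ENNReal.ofReal (Real.exp (M * v)) * f v := by
          rw [zero_sub]
          exact lintegral_mono_set Icc_subset_Icc_union_Icc
      _ ≤ _ := lintegral_union_le _ _ _
      _ ≤ _ := by gcongr; exact setLIntegral_Icc_neg_ofReal_exp_mul_le hM.le hconst
  have hmain := (lintegral_ofReal_exp_mul_div_window_le hδ hM.ne' 0 T hf).trans
    (mul_le_mul_right hsplit _)
  refine ⟨hmain, fun hδ1 => hmain.trans ?_⟩
  gcongr
  exact mul_le_of_le_one_left zero_le (ENNReal.ofReal_le_one.2 hδ1)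

/-- For `δ > 0`, `M > 0`, `T ≥ 0` and a nonnegative measurable `f` with
`f v = f 0` for `v ≤ 0`,
`∫₀^T (e^{Mu}/δ) ∫_{u-δ}^u f(v) dv du
  ≤ ((e^{Mδ} - 1)/(Mδ)) (δ f(0) + ∫₀^T e^{Mu} f(u) du)`;
in particular, for `δ ≤ 1` the right-hand side is at most
`((e^{Mδ} - 1)/(Mδ)) (f(0) + ∫₀^T e^{Mu} f(u) du)`. -/
theorem window_average_exp_weight_bound (δ M T : ℝ) (hδ : 0 < δ) (hM : 0 < M) (hT : 0 ≤ T)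
    (f : ℝ → ℝ≥0∞) (hf : Measurable f) (hconst : ∀ v : ℝ, v ≤ 0 → f v = f 0) :
    ((∫⁻ u in Set.Icc (0 : ℝ) T,
        ENNReal.ofReal (Real.exp (M * u) / δ) * ∫⁻ v in Set.Icc (u - δ) u, f v) ≤
      ENNReal.ofReal ((Real.exp (M * δ) - 1) / (M * δ)) *
        (ENNReal.ofReal δ * f 0 +
          ∫⁻ u in Set.Icc (0 : ℝ) T, ENNReal.ofReal (Real.exp (M * u)) * f u)) ∧
    (δ ≤ 1 →
      (∫⁻ u in Set.Icc (0 : ℝ) T,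
          ENNReal.ofReal (Real.exp (M * u) / δ) * ∫⁻ v in Set.Icc (u - δ) u, f v) ≤
        ENNReal.ofReal ((Real.exp (M * δ) - 1) / (M * δ)) *
          (f 0 + ∫⁻ u in Set.Icc (0 : ℝ) T, ENNReal.ofReal (Real.exp (M * u)) * f u)) :=
  window_average_exp_weight_bound_general δ M T hδ hM f hf hconst
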